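/- arXiv:2405.00665 — 10 statements merged into one kernel-verified Lean document; each statement's English description precedes it below -/
import Mathlib

section
/- Let x be a line-age family with parameters p ∈ (0,1), p_e ∈ ℝ, x_S ∈ ℝ, m ≥ 1, and let g be a normalized line family with parameters p and m. Then x(j,h) = x_S + p_e · g(j,h) for all 0 ≤ j ≤ h ≤ m. In particular, the expected age of every user block has the form x_S + p_e·g(j,h) with g independent of x_S and p_e. -/
/-- A line-age family with parameters `p`, `pe`, `xS`, `m`:
boundary value `xS` when `j = 0` or `h = m`, and the gossip recursion in the interior. -/
def IsLineAgeFamily (p pe xS : ℝ) (m : ℤ) (x : ℤ → ℤ → ℝ) : Prop :=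
  (∀ j h : ℤ, 0 ≤ j → j ≤ h → h ≤ m → (j = 0 ∨ h = m) → x j h = xS) ∧
  (∀ j h : ℤ, 1 ≤ j → j ≤ h → h ≤ m - 1 →
    x j h * (1 - (1 - p) ^ 2) =
      pe + x (j - 1) (h + 1) * p ^ 2 + x (j - 1) h * ((1 - p) * p)
        + x j (h + 1) * (p * (1 - p)))

/-- a line-age family decomposes as `x(j,h) = x_S + p_e · g(j,h)`,
where `g` is the normalized line family (parameters `pe = 1`, `xS = 0`). -/
theorem lineAgeFamily_eq_xS_add_pe_mul_normalized (p pe xS : ℝ)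
    (hp0 : 0 < p) (hp1 : p < 1) (m : ℤ) (hm : 1 ≤ m)
    (x g : ℤ → ℤ → ℝ)
    (hx : IsLineAgeFamily p pe xS m x)
    (hg : IsLineAgeFamily p 1 0 m g) :
    ∀ j h : ℤ, 0 ≤ j → j ≤ h → h ≤ m → x j h = xS + pe * g j h := by
  obtain ⟨hxb, hxr⟩ := hx
  obtain ⟨hgb, hgr⟩ := hg
  have hD : (1 - (1 - p) ^ 2) ≠ 0 := by nlinarith
  have key : ∀ n : ℕ, ∀ j h : ℤ, 0 ≤ j → j ≤ h → h ≤ m → (j + (m - h)).toNat = n →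
      x j h = xS + pe * g j h := by
    intro n
    induction n using Nat.strong_induction_on with
    | _ n ih =>
      intro j h hj hjh hhm hn
      by_cases h0 : j = 0 ∨ h = m
      · rw [hxb j h hj hjh hhm h0, hgb j h hj hjh hhm h0]; ring
      · push_neg at h0
        have hj1 : 1 ≤ j := by omega
        have hh1 : h ≤ m - 1 := by omega
        have e1 := hxr j h hj1 hjh hh1
        have e2 := hgr j h hj1 hjh hh1
        have nA := ih ((j - 1 + (m - (h + 1))).toNat) (by omega) (j - 1) (h + 1)
          (by omega) (by omega) (by omega) rfl
        have nB := ih ((j - 1 + (m - h)).toNat) (by omega) (j - 1) h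
          (by omega) (by omega) (by omega) rfl
        have nC := ih ((j + (m - (h + 1))).toNat) (by omega) j (h + 1)
          (by omega) (by omega) (by omega) rfl
        have hkey : x j h * (1 - (1 - p) ^ 2) = (xS + pe * g j h) * (1 - (1 - p) ^ 2) := by
          rw [e1, nA, nB, nC]
          linear_combination -pe * e2
        exact mul_right_cancel₀ hD hkey
  intro j h hj hjh hhm
  exact key ((j + (m - h)).toNat) j h hj hjh hhm rfl
end

section
/- Let x be a line-age family with parameters p ∈ (0,1), p_e > 0, x_S ∈ ℝ, m ≥ 2. Then x(j,h) > x_S for all interior pairs 1 ≤ j ≤ h ≤ m−1; i.e., every block of users containing no subscriber has strictly larger expected age than a subscriber. -/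
/-- for `pe > 0` and `m ≥ 2`, every interior block has strictly larger
expected age than a subscriber: `x(j,h) > x_S` for all `1 ≤ j ≤ h ≤ m − 1`. -/
theorem lineAgeFamily_interior_gt_xS (p pe xS : ℝ)
    (hp0 : 0 < p) (hp1 : p < 1) (hpe : 0 < pe) (m : ℤ) (hm : 2 ≤ m)
    (x : ℤ → ℤ → ℝ) (hx : IsLineAgeFamily p pe xS m x) :
    ∀ j h : ℤ, 1 ≤ j → j ≤ h → h ≤ m - 1 → xS < x j h := by
  obtain ⟨hb, hr⟩ := hx
  have hD : 0 < 1 - (1 - p) ^ 2 := by nlinarith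
  have key : ∀ n : ℕ, ∀ j h : ℤ, 0 ≤ j → j ≤ h → h ≤ m → j + (m - h) ≤ (n : ℤ) →
      xS ≤ x j h := by
    intro n
    induction n with
    | zero =>
      intro j h hj hjh hhm hn
      rcases eq_or_lt_of_le hj with h0 | h0
      · exact le_of_eq (hb j h hj hjh hhm (Or.inl h0.symm)).symm
      rcases eq_or_lt_of_le hhm with hm' | hm'
      · exact le_of_eq (hb j h hj hjh hhm (Or.inr hm')).symm
      exfalso; push_cast at hn; omega
    | succ n ih =>
      intro j h hj hjh hhm hn
      rcases eq_or_lt_of_le hj with h0 | h0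
      · exact le_of_eq (hb j h hj hjh hhm (Or.inl h0.symm)).symm
      rcases eq_or_lt_of_le hhm with hm' | hm'
      · exact le_of_eq (hb j h hj hjh hhm (Or.inr hm')).symm
      have h1 : 1 ≤ j := h0
      have h2 : h ≤ m - 1 := by omega
      have heq := hr j h h1 hjh h2
      have a1 : xS ≤ x (j - 1) (h + 1) :=
        ih (j - 1) (h + 1) (by omega) (by omega) (by omega) (by push_cast at hn ⊢; omega)
      have a2 : xS ≤ x (j - 1) h :=
        ih (j - 1) h (by omega) (by omega) (by omega) (by push_cast at hn ⊢; omega)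
      have a3 : xS ≤ x j (h + 1) :=
        ih j (h + 1) hj (by omega) (by omega) (by push_cast at hn ⊢; omega)
      have hstep : xS * (1 - (1 - p) ^ 2) ≤ x j h * (1 - (1 - p) ^ 2) := by
        nlinarith [mul_nonneg (sub_nonneg.2 a1) (sq_nonneg p),
          mul_nonneg (sub_nonneg.2 a2) (mul_nonneg (by linarith : (0:ℝ) ≤ 1 - p) hp0.le),
          mul_nonneg (sub_nonneg.2 a3) (mul_nonneg hp0.le (by linarith : (0:ℝ) ≤ 1 - p))]
      exact le_of_mul_le_mul_right hstep hD
  have key' : ∀ j h : ℤ, 0 ≤ j → j ≤ h → h ≤ m → xS ≤ x j h := by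
    intro j h hj hjh hhm
    exact key (j + (m - h)).toNat j h hj hjh hhm (Int.self_le_toNat _)
  intro j h h1 hjh h2
  have heq := hr j h h1 hjh h2
  have a1 : xS ≤ x (j - 1) (h + 1) := key' _ _ (by omega) (by omega) (by omega)
  have a2 : xS ≤ x (j - 1) h := key' _ _ (by omega) (by omega) (by omega)
  have a3 : xS ≤ x j (h + 1) := key' _ _ (by omega) (by omega) (by omega)
  have hstep : xS * (1 - (1 - p) ^ 2) < x j h * (1 - (1 - p) ^ 2) := by
    nlinarith [mul_nonneg (sub_nonneg.2 a1) (sq_nonneg p),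
      mul_nonneg (sub_nonneg.2 a2) (mul_nonneg (by linarith : (0:ℝ) ≤ 1 - p) hp0.le),
      mul_nonneg (sub_nonneg.2 a3) (mul_nonneg hp0.le (by linarith : (0:ℝ) ≤ 1 - p))]
  exact lt_of_mul_lt_mul_right hstep hD.le
end

section
/- Let x be a line-age family with parameters p ∈ (0,1), p_e ≥ 0, x_S ∈ ℝ, m ≥ 1. Then the expected age is monotone under set inclusion: for all integers 0 ≤ j ≤ j' ≤ h' ≤ h ≤ m, one has x(j,h) ≤ x(j',h'). In particular the expected age of a larger block of users is no greater than that of any sub-block. -/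
/-- monotonicity under set inclusion: for `0 ≤ j ≤ j' ≤ h' ≤ h ≤ m`,
the age of the larger block is no greater than that of the sub-block. -/
theorem lineAgeFamily_mono_subset (p pe xS : ℝ)
    (hp0 : 0 < p) (hp1 : p < 1) (hpe : 0 ≤ pe) (m : ℤ) (hm : 1 ≤ m)
    (x : ℤ → ℤ → ℝ) (hx : IsLineAgeFamily p pe xS m x) :
    ∀ j j' h' h : ℤ, 0 ≤ j → j ≤ j' → j' ≤ h' → h' ≤ h → h ≤ m →
      x j h ≤ x j' h' := by
  obtain ⟨hb, hr⟩ := hx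
  have hq : 0 < 1 - (1 - p) ^ 2 := by nlinarith
  have hp1' : (0:ℝ) ≤ 1 - p := by linarith
  -- Lemma 1: all values are at least xS
  have L1 : ∀ n : ℕ, ∀ j h : ℤ, 0 ≤ j → j ≤ h → h ≤ m →
      (m - (h - j)).toNat ≤ n → xS ≤ x j h := by
    intro n
    induction n with
    | zero =>
      intro j h hj hjh hhm hn
      have hj0 : j = 0 := by omega
      exact le_of_eq (hb j h hj hjh hhm (Or.inl hj0)).symm
    | succ n ih =>
      intro j h hj hjh hhm hn
      by_cases hj0 : j = 0
      · exact le_of_eq (hb j h hj hjh hhm (Or.inl hj0)).symm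
      by_cases hhm' : h = m
      · exact le_of_eq (hb j h hj hjh hhm (Or.inr hhm')).symm
      have hrec := hr j h (by omega) hjh (by omega)
      have ia := ih (j - 1) (h + 1) (by omega) (by omega) (by omega) (by omega)
      have ib := ih (j - 1) h (by omega) (by omega) (by omega) (by omega)
      have ic := ih j (h + 1) (by omega) (by omega) (by omega) (by omega)
      have h1 : xS * (1 - (1 - p) ^ 2) ≤ x j h * (1 - (1 - p) ^ 2) := by
        nlinarith [mul_nonneg (sub_nonneg.2 ia) (sq_nonneg p),
          mul_nonneg (sub_nonneg.2 ib) (mul_nonneg hp1' hp0.le),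
          mul_nonneg (sub_nonneg.2 ic) (mul_nonneg hp0.le hp1')]
      exact le_of_mul_le_mul_right h1 hq
  -- Lemma 2: increasing in the left endpoint
  have L2 : ∀ n : ℕ, ∀ j h : ℤ, 1 ≤ j → j ≤ h → h ≤ m →
      (m - (h - j)).toNat ≤ n → x (j - 1) h ≤ x j h := by
    intro n
    induction n with
    | zero => intro j h hj hjh hhm hn; exfalso; omega
    | succ n ih =>
      intro j h hj hjh hhm hn
      by_cases hhm' : h = m
      · rw [hb (j - 1) h (by omega) (by omega) hhm (Or.inr hhm'),
          hb j h (by omega) hjh hhm (Or.inr hhm')]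
      by_cases hj1 : j = 1
      · subst hj1
        rw [show (1:ℤ) - 1 = 0 by norm_num, hb 0 h le_rfl (by omega) hhm (Or.inl rfl)]
        exact L1 (m - (h - 1)).toNat 1 h (by omega) hjh hhm le_rfl
      have hrec1 := hr j h hj hjh (by omega)
      have hrec2 := hr (j - 1) h (by omega) (by omega) (by omega)
      have ia := ih (j - 1) (h + 1) (by omega) (by omega) (by omega) (by omega)
      have ib := ih (j - 1) h (by omega) (by omega) (by omega) (by omega)
      have ic := ih j (h + 1) (by omega) (by omega) (by omega) (by omega)
      have h1 : x (j - 1) h * (1 - (1 - p) ^ 2) ≤ x j h * (1 - (1 - p) ^ 2) := by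
        nlinarith [mul_nonneg (sub_nonneg.2 ia) (sq_nonneg p),
          mul_nonneg (sub_nonneg.2 ib) (mul_nonneg hp1' hp0.le),
          mul_nonneg (sub_nonneg.2 ic) (mul_nonneg hp0.le hp1')]
      exact le_of_mul_le_mul_right h1 hq
  -- Lemma 3: decreasing in the right endpoint
  have L3 : ∀ n : ℕ, ∀ j h : ℤ, 0 ≤ j → j ≤ h → h ≤ m - 1 →
      (m - (h - j)).toNat ≤ n → x j (h + 1) ≤ x j h := by
    intro n
    induction n with
    | zero => intro j h hj hjh hhm hn; exfalso; omega
    | succ n ih =>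
      intro j h hj hjh hhm hn
      by_cases hj0 : j = 0
      · subst hj0
        rw [hb 0 (h + 1) le_rfl (by omega) (by omega) (Or.inl rfl),
          hb 0 h le_rfl hjh (by omega) (Or.inl rfl)]
      by_cases hhm' : h = m - 1
      · subst hhm'
        rw [show m - 1 + 1 = m by ring, hb j m (by omega) (by omega) le_rfl (Or.inr rfl)]
        exact L1 (m - (m - 1 - j)).toNat j (m - 1) (by omega) hjh (by omega) le_rfl
      have hrec1 := hr j h (by omega) hjh hhm
      have hrec2 := hr j (h + 1) (by omega) (by omega) (by omega)
      have ia := ih (j - 1) (h + 1) (by omega) (by omega) (by omega) (by omega)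
      have ib := ih (j - 1) h (by omega) (by omega) (by omega) (by omega)
      have ic := ih j (h + 1) (by omega) (by omega) (by omega) (by omega)
      have h1 : x j (h + 1) * (1 - (1 - p) ^ 2) ≤ x j h * (1 - (1 - p) ^ 2) := by
        nlinarith [mul_nonneg (sub_nonneg.2 ia) (sq_nonneg p),
          mul_nonneg (sub_nonneg.2 ib) (mul_nonneg hp1' hp0.le),
          mul_nonneg (sub_nonneg.2 ic) (mul_nonneg hp0.le hp1')]
      exact le_of_mul_le_mul_right h1 hq
  -- chained monotonicity in left endpoint
  have ML : ∀ n : ℕ, ∀ j j' h : ℤ, 0 ≤ j → j ≤ j' → j' ≤ h → h ≤ m →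
      (j' - j).toNat ≤ n → x j h ≤ x j' h := by
    intro n
    induction n with
    | zero =>
      intro j j' h hj hjj hjh hhm hn
      have : j = j' := by omega
      exact le_of_eq (by rw [this])
    | succ n ih =>
      intro j j' h hj hjj hjh hhm hn
      by_cases heq : j = j'
      · exact le_of_eq (by rw [heq])
      calc x j h ≤ x (j' - 1) h :=
            ih j (j' - 1) h hj (by omega) (by omega) hhm (by omega)
        _ ≤ x j' h := L2 (m - (h - j')).toNat j' h (by omega) hjh hhm le_rfl
  -- chained monotonicity in right endpoint
  have MR : ∀ n : ℕ, ∀ j h' h : ℤ, 0 ≤ j → j ≤ h' → h' ≤ h → h ≤ m →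
      (h - h').toNat ≤ n → x j h ≤ x j h' := by
    intro n
    induction n with
    | zero =>
      intro j h' h hj hjh hhh hhm hn
      have : h = h' := by omega
      exact le_of_eq (by rw [this])
    | succ n ih =>
      intro j h' h hj hjh hhh hhm hn
      by_cases heq : h = h'
      · exact le_of_eq (by rw [heq])
      calc x j h ≤ x j (h' + 1) :=
            ih j (h' + 1) h hj (by omega) (by omega) hhm (by omega)
        _ ≤ x j h' := L3 (m - (h' - j)).toNat j h' hj hjh (by omega) le_rfl
  intro j j' h' h hj hjj hjh hhh hhm
  calc x j h ≤ x j' h := ML (j' - j).toNat j j' h hj hjj (by omega) hhm le_rfl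
    _ ≤ x j' h' := MR (h - h').toNat j' h' h (by omega) hjh hhh hhm le_rfl
end

section
/- Let x be a line-age family with parameters p ∈ (0,1), p_e ∈ ℝ, x_S ∈ ℝ, m ≥ 1. Then the family is reflection-symmetric: x(j,h) = x(m−h, m−j) for all 0 ≤ j ≤ h ≤ m. -/
/-- reflection symmetry of the line-age family:
`x(j,h) = x(m−h, m−j)` for all `0 ≤ j ≤ h ≤ m`. -/
theorem lineAgeFamily_reflection_symm (p pe xS : ℝ)
    (hp0 : 0 < p) (hp1 : p < 1) (m : ℤ) (hm : 1 ≤ m)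
    (x : ℤ → ℤ → ℝ) (hx : IsLineAgeFamily p pe xS m x) :
    ∀ j h : ℤ, 0 ≤ j → j ≤ h → h ≤ m → x j h = x (m - h) (m - j) := by
  obtain ⟨hb, hr⟩ := hx
  have hC : (0:ℝ) < 1 - (1 - p) ^ 2 := by nlinarith
  have main : ∀ kj : ℕ, ∀ j : ℤ, j = (kj : ℤ) → ∀ h : ℤ, j ≤ h → h ≤ m →
      x j h = x (m - h) (m - j) := by
    intro kj
    induction kj with
    | zero =>
      intro j hj h h1 h2
      have hj0 : j = 0 := by omega
      subst hj0
      rw [hb 0 h le_rfl h1 h2 (Or.inl rfl),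
          hb (m - h) (m - 0) (by omega) (by omega) (by omega) (Or.inr (by omega))]
    | succ kj ihj =>
      intro j hj
      have hj1 : 1 ≤ j := by omega
      have inner : ∀ k : ℕ, ∀ h : ℤ, j ≤ h → h ≤ m → m - h = (k : ℤ) →
          x j h = x (m - h) (m - j) := by
        intro k
        induction k with
        | zero =>
          intro h h1 h2 h3
          have hhm : h = m := by omega
          rw [hb j h (by omega) h1 h2 (Or.inr hhm),
              hb (m - h) (m - j) (by omega) (by omega) (by omega) (Or.inl (by omega))]
        | succ k ihk =>
          intro h h1 h2 h3
          have h2' : h ≤ m - 1 := by omega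
          have hA := ihj (j - 1) (by omega) (h + 1) (by omega) (by omega)
          have hB := ihj (j - 1) (by omega) h (by omega) h2
          have hCk := ihk (h + 1) (by omega) (by omega) (by omega)
          have e1 := hr j h hj1 h1 h2'
          rw [hA, hB, hCk] at e1
          have e2 := hr (m - h) (m - j) (by omega) (by omega) (by omega)
          have i1 : m - h - 1 = m - (h + 1) := by ring
          have i2 : m - j + 1 = m - (j - 1) := by ring
          rw [i1, i2] at e2
          have key : (x j h - x (m - h) (m - j)) * (1 - (1 - p) ^ 2) = 0 := by
            linear_combination e1 - e2
          rcases mul_eq_zero.mp key with h0 | h0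
          · linarith [sub_eq_zero.mp h0]
          · exact absurd h0 (ne_of_gt hC)
      intro h h1 h2
      exact inner (m - h).toNat h h1 h2 (by omega)
  intro j h hj h1 h2
  exact main j.toNat j (by omega) h h1 h2
end

section
/- (Lemma 2) Fix p ∈ (0,1), p_e ∈ ℝ, x_S ∈ ℝ and integers m, m' ≥ 1. Let x be a line-age family with parameter m and x' a line-age family with parameter m' (same p, p_e, x_S). Then for all integers j, h ≥ 0 with j + h ≤ m and j + h ≤ m', one has x(j, m−h) = x'(j, m'−h). That is, the expected age of a block of users depends only on its distances j and h to the nearest subscriber on its left and right, not on the subscriber spacing m. -/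
/-- Lemma 2: the expected age of a block depends only on its distances
`j` and `h` to the nearest subscribers, not on the subscriber spacing: line-age
families for spacings `m` and `m'` satisfy `x(j, m−h) = x'(j, m'−h)`. -/
theorem lineAgeFamily_spacing_independent (p pe xS : ℝ)
    (hp0 : 0 < p) (hp1 : p < 1) (m m' : ℤ) (hm : 1 ≤ m) (hm' : 1 ≤ m')
    (x x' : ℤ → ℤ → ℝ)
    (hx : IsLineAgeFamily p pe xS m x) (hx' : IsLineAgeFamily p pe xS m' x') :
    ∀ j h : ℤ, 0 ≤ j → 0 ≤ h → j + h ≤ m → j + h ≤ m' →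
      x j (m - h) = x' j (m' - h) := by
  have hc : (1 - (1 - p) ^ 2) ≠ 0 := by nlinarith
  have key : ∀ n : ℕ, ∀ j h : ℤ, 0 ≤ j → 0 ≤ h → j + h ≤ m → j + h ≤ m' →
      j + h = (n : ℤ) → x j (m - h) = x' j (m' - h) := by
    intro n
    induction n using Nat.strong_induction_on with
    | _ n ih =>
      intro j h hj hh hjm hjm' hn
      rcases eq_or_lt_of_le hj with hj0 | hj1
      · rw [hx.1 j (m - h) hj (by omega) (by omega) (Or.inl hj0.symm),
           hx'.1 j (m' - h) hj (by omega) (by omega) (Or.inl hj0.symm)]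
      rcases eq_or_lt_of_le hh with hh0 | hh1
      · rw [show m - h = m by omega, hx.1 j m hj (by omega) le_rfl (Or.inr rfl),
           show m' - h = m' by omega, hx'.1 j m' hj (by omega) le_rfl (Or.inr rfl)]
      · have e1 := hx.2 j (m - h) (by omega) (by omega) (by omega)
        have e2 := hx'.2 j (m' - h) (by omega) (by omega) (by omega)
        rw [show m - h + 1 = m - (h - 1) by ring] at e1
        rw [show m' - h + 1 = m' - (h - 1) by ring] at e2
        have i1 : x (j - 1) (m - (h - 1)) = x' (j - 1) (m' - (h - 1)) :=
          ih (n - 2) (by omega) (j - 1) (h - 1) (by omega) (by omega) (by omega)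
            (by omega) (by push_cast; omega)
        have i2 : x (j - 1) (m - h) = x' (j - 1) (m' - h) :=
          ih (n - 1) (by omega) (j - 1) h (by omega) (by omega) (by omega)
            (by omega) (by push_cast; omega)
        have i3 : x j (m - (h - 1)) = x' j (m' - (h - 1)) :=
          ih (n - 1) (by omega) j (h - 1) (by omega) (by omega) (by omega)
            (by omega) (by push_cast; omega)
        rw [i1, i2, i3] at e1
        exact mul_right_cancel₀ hc (e1.trans e2.symm)
  intro j h hj hh hjm hjm'
  exact key (j + h).toNat j h hj hh hjm hjm' (by omega)
end

section
/- (Lemma 3(a)) Fix p ∈ (0,1), p_e ≥ 0, x_S ∈ ℝ and an integer m ≥ 2. Let x be a line-age family with parameter m and x' a line-age family with parameter m+1 (same p, p_e, x_S). Then x(⌊m/2⌋, ⌊m/2⌋) ≤ x'(⌊(m+1)/2⌋, ⌊(m+1)/2⌋); i.e., the expected age of the middle non-subscribing user is nondecreasing in the subscriber spacing m. -/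
/-- Discrete minimum principle: a function satisfying the (inhomogeneous, nonneg source)
recursion in the interior and nonnegative on the boundary is nonnegative everywhere. -/
lemma lineAge_min_principle (p c : ℝ) (hp0 : 0 < p) (hp1 : p < 1) (hc : 0 ≤ c) (m : ℤ)
    (d : ℤ → ℤ → ℝ)
    (hbd : ∀ j h : ℤ, 0 ≤ j → j ≤ h → h ≤ m → (j = 0 ∨ h = m) → 0 ≤ d j h)
    (hrec : ∀ j h : ℤ, 1 ≤ j → j ≤ h → h ≤ m - 1 →
      d j h * (1 - (1 - p) ^ 2) =
        c + d (j - 1) (h + 1) * p ^ 2 + d (j - 1) h * ((1 - p) * p)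
          + d j (h + 1) * (p * (1 - p))) :
    ∀ j h : ℤ, 0 ≤ j → j ≤ h → h ≤ m → 0 ≤ d j h := by
  have hq : 0 < 1 - (1 - p) ^ 2 := by nlinarith
  have key : ∀ n : ℕ, ∀ j h : ℤ, 0 ≤ j → j ≤ h → h ≤ m → (j + m - h).toNat = n → 0 ≤ d j h := by
    intro n
    induction n using Nat.strong_induction_on with
    | _ n ih =>
      intro j h hj hjh hh hn
      by_cases hb : j = 0 ∨ h = m
      · exact hbd j h hj hjh hh hb
      · push_neg at hb
        have hj1 : 1 ≤ j := by omega
        have hh1 : h ≤ m - 1 := by omega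
        have e := hrec j h hj1 hjh hh1
        have d1 : 0 ≤ d (j - 1) (h + 1) :=
          ih ((j - 1) + m - (h + 1)).toNat (by omega) _ _ (by omega) (by omega) (by omega) rfl
        have d2 : 0 ≤ d (j - 1) h :=
          ih ((j - 1) + m - h).toNat (by omega) _ _ (by omega) (by omega) (by omega) rfl
        have d3 : 0 ≤ d j (h + 1) :=
          ih (j + m - (h + 1)).toNat (by omega) _ _ (by omega) (by omega) (by omega) rfl
        nlinarith [mul_nonneg d1 (sq_nonneg p), mul_nonneg d2 (mul_nonneg (by linarith : (0:ℝ) ≤ 1 - p) hp0.le), mul_nonneg d3 (mul_nonneg hp0.le (by linarith : (0:ℝ) ≤ 1 - p))]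
  intro j h hj hjh hh
  exact key (j + m - h).toNat j h hj hjh hh rfl


/-- Lemma 3(a): the expected age of the middle non-subscribing user is
nondecreasing in the subscriber spacing: with spacings `m` and `m + 1`,
`x(⌊m/2⌋, ⌊m/2⌋) ≤ x'(⌊(m+1)/2⌋, ⌊(m+1)/2⌋)`. -/
theorem lineAgeFamily_middle_age_mono_in_m (p pe xS : ℝ)
    (hp0 : 0 < p) (hp1 : p < 1) (hpe : 0 ≤ pe) (m : ℤ) (hm : 2 ≤ m)
    (x x' : ℤ → ℤ → ℝ)
    (hx : IsLineAgeFamily p pe xS m x) (hx' : IsLineAgeFamily p pe xS (m + 1) x') :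
    x (m / 2) (m / 2) ≤ x' ((m + 1) / 2) ((m + 1) / 2) := by
  obtain ⟨hbx, hrx⟩ := hx
  obtain ⟨hbx', hrx'⟩ := hx'
  -- Step 1: x' ≥ xS everywhere on its domain.
  have hge : ∀ j h : ℤ, 0 ≤ j → j ≤ h → h ≤ m + 1 → xS ≤ x' j h := by
    have := lineAge_min_principle p pe hp0 hp1 hpe (m + 1) (fun j h => x' j h - xS)
      (by intro j h hj hjh hh hb; simp [hbx' j h hj hjh hh hb])
      (by
        intro j h hj hjh hh
        have e := hrx' j h hj hjh hh
        linear_combination e)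
    intro j h hj hjh hh
    have := this j h hj hjh hh
    simpa using this
  -- Step 2: x j h ≤ x' j h on the domain of x.
  have step2 : ∀ j h : ℤ, 0 ≤ j → j ≤ h → h ≤ m → x j h ≤ x' j h := by
    have := lineAge_min_principle p 0 hp0 hp1 le_rfl m (fun j h => x' j h - x j h)
      (by
        intro j h hj hjh hh hb
        have hxv := hbx j h hj hjh hh hb
        rcases hb with hb | hb
        · have : x' j h = xS := hbx' j h hj hjh (by omega) (Or.inl hb)
          simp [hxv, this]
        · have : xS ≤ x' j h := hge j h hj hjh (by omega)
          simp only [hxv]; linarith)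
      (by
        intro j h hj hjh hh
        have e1 := hrx j h hj hjh hh
        have e2 := hrx' j h hj hjh (by omega)
        linear_combination e2 - e1)
    intro j h hj hjh hh
    have := this j h hj hjh hh
    linarith
  -- Step 3: x j h ≤ x' (j+1) (h+1) on the domain of x.
  have step3 : ∀ j h : ℤ, 0 ≤ j → j ≤ h → h ≤ m → x j h ≤ x' (j + 1) (h + 1) := by
    have := lineAge_min_principle p 0 hp0 hp1 le_rfl m (fun j h => x' (j + 1) (h + 1) - x j h)
      (by
        intro j h hj hjh hh hb
        have hxv := hbx j h hj hjh hh hb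
        rcases hb with hb | hb
        · have : xS ≤ x' (j + 1) (h + 1) := hge (j + 1) (h + 1) (by omega) (by omega) (by omega)
          simp only [hxv]; linarith
        · have : x' (j + 1) (h + 1) = xS :=
            hbx' (j + 1) (h + 1) (by omega) (by omega) (by omega) (Or.inr (by omega))
          simp [hxv, this])
      (by
        intro j h hj hjh hh
        have e1 := hrx j h hj hjh hh
        have e2 := hrx' (j + 1) (h + 1) (by omega) (by omega) (by omega)
        have r1 : j + 1 - 1 = j := by ring
        have r2 : (h + 1) + 1 = h + 2 := by ring
        rw [r1, r2] at e2
        have r3 : h + 1 + 1 = h + 2 := by ring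
        rw [show j - 1 + 1 = j by ring, show h + 1 + 1 = h + 2 by ring]
        linear_combination e2 - e1)
    intro j h hj hjh hh
    have := this j h hj hjh hh
    linarith
  rcases Int.even_or_odd m with ⟨k, hk⟩ | ⟨k, hk⟩
  · have h1 : (m + 1) / 2 = m / 2 := by omega
    rw [h1]
    exact step2 (m / 2) (m / 2) (by omega) le_rfl (by omega)
  · have h1 : (m + 1) / 2 = m / 2 + 1 := by omega
    rw [h1]
    exact step3 (m / 2) (m / 2) (by omega) le_rfl (by omega)
end

section
/- (Lemma 5) Fix p ∈ (0,1) and a real c > 0. For each integer s ≥ 1 let g_s denote the unique normalized line family with parameters p and s. Suppose the set {m ≥ 1 : g_{2m}(m,m) ≥ c} is nonempty and let m* be its minimum. Then the set {m ≥ 1 : g_m(⌊m/2⌋, ⌊m/2⌋) < c} is nonempty and bounded above, and its maximum m** satisfies m* = ⌊m**/2⌋ + 1. (Here c plays the role of (L−1)(1/β+1): m* is the smallest subscriber spacing for which subscribers are AC-stable and m** the largest spacing for which all non-subscribers are AC-stable, and the symmetric network is AC-stable exactly for spacings m ∈ {m*,…,m**}.) -/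
lemma tri_minprin (p : ℝ) (hp0 : 0 < p) (hp1 : p < 1) (m : ℤ) (x : ℤ → ℤ → ℝ)
    (hb : ∀ j h : ℤ, 0 ≤ j → j ≤ h → h ≤ m → (j = 0 ∨ h = m) → 0 ≤ x j h)
    (hi : ∀ j h : ℤ, 1 ≤ j → j ≤ h → h ≤ m - 1 →
      x (j-1) (h+1) * p^2 + x (j-1) h * ((1-p)*p) + x j (h+1) * (p*(1-p))
        ≤ x j h * (1 - (1-p)^2)) :
    ∀ j h : ℤ, 0 ≤ j → j ≤ h → h ≤ m → 0 ≤ x j h := by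
  have hq : 0 < 1 - (1-p)^2 := by nlinarith
  have key : ∀ n : ℕ, ∀ j h : ℤ, 0 ≤ j → j ≤ h → h ≤ m → m - n ≤ h - j → 0 ≤ x j h := by
    intro n
    induction n with
    | zero =>
      intro j h hj hjh hhm hgap
      exact hb j h hj hjh hhm (Or.inl (by omega))
    | succ n ih =>
      intro j h hj hjh hhm hgap
      by_cases hc1 : j = 0 ∨ h = m
      · exact hb j h hj hjh hhm hc1
      · push_neg at hc1
        have h1 : 1 ≤ j := by omega
        have h2 : h ≤ m - 1 := by omega
        have n1 := ih (j-1) (h+1) (by omega) (by omega) (by omega) (by omega)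
        have n2 := ih (j-1) h (by omega) (by omega) (by omega) (by omega)
        have n3 := ih j (h+1) (by omega) (by omega) (by omega) (by omega)
        have hS := hi j h h1 hjh h2
        have t1 : 0 ≤ x (j-1) (h+1) * p^2 := mul_nonneg n1 (by positivity)
        have t2 : 0 ≤ x (j-1) h * ((1-p)*p) := mul_nonneg n2 (by nlinarith)
        have t3 : 0 ≤ x j (h+1) * (p*(1-p)) := mul_nonneg n3 (by nlinarith)
        have hS0 : (0:ℝ) * (1 - (1-p)^2) ≤ x j h * (1 - (1-p)^2) := by
          rw [zero_mul]; linarith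
        exact le_of_mul_le_mul_right hS0 hq
  intro j h hj hjh hhm
  exact key (m - (h - j)).toNat j h hj hjh hhm (by omega)

section
variable (p : ℝ) (hp0 : 0 < p) (hp1 : p < 1)
variable (g : ℤ → ℤ → ℤ → ℝ) (hg : ∀ s : ℤ, 1 ≤ s → IsLineAgeFamily p 1 0 s (g s))
include hp0 hp1 hg

lemma g_nonneg : ∀ s : ℤ, 1 ≤ s → ∀ j h : ℤ, 0 ≤ j → j ≤ h → h ≤ s → 0 ≤ g s j h := by
  intro s hs
  obtain ⟨hb, hr⟩ := hg s hs
  apply tri_minprin p hp0 hp1 s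
  · intro j h hj hjh hhm hbd
    rw [hb j h hj hjh hhm hbd]
  · intro j h h1 h2 h3
    have := hr j h h1 h2 h3
    linarith

lemma g_mono : ∀ s : ℤ, 1 ≤ s → ∀ j h : ℤ, 0 ≤ j → j ≤ h → h ≤ s →
    g s j h ≤ g (s+1) j h := by
  intro s hs
  obtain ⟨hb, hr⟩ := hg s hs
  obtain ⟨hb', hr'⟩ := hg (s+1) (by omega)
  have H := tri_minprin p hp0 hp1 s (fun a b => g (s+1) a b - g s a b) ?_ ?_
  · intro j h hj hjh hhm
    have := H j h hj hjh hhm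
    linarith
  · intro j h hj hjh hhm hbd
    rcases hbd with h0 | hm
    · rw [hb j h hj hjh hhm (Or.inl h0), hb' j h hj hjh (by omega) (Or.inl h0)]
      norm_num
    · rw [hb j h hj hjh hhm (Or.inr hm)]
      have := g_nonneg p hp0 hp1 g hg (s+1) (by omega) j h hj hjh (by omega)
      linarith
  · intro j h h1 h2 h3
    have e1 := hr j h h1 h2 h3
    have e2 := hr' j h h1 h2 (by omega)
    simp only [sub_mul]
    linarith

lemma g_shift : ∀ s : ℤ, 1 ≤ s → ∀ j h : ℤ, 0 ≤ j → j ≤ h → h ≤ s →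
    g s j h ≤ g (s+2) (j+1) (h+1) := by
  intro s hs
  obtain ⟨hb, hr⟩ := hg s hs
  obtain ⟨hb', hr'⟩ := hg (s+2) (by omega)
  have H := tri_minprin p hp0 hp1 s (fun a b => g (s+2) (a+1) (b+1) - g s a b) ?_ ?_
  · intro j h hj hjh hhm
    have := H j h hj hjh hhm
    linarith
  · intro j h hj hjh hhm hbd
    rw [hb j h hj hjh hhm hbd]
    have := g_nonneg p hp0 hp1 g hg (s+2) (by omega) (j+1) (h+1)
      (by omega) (by omega) (by omega)
    linarith
  · intro j h h1 h2 h3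
    have e1 := hr j h h1 h2 h3
    have e2 := hr' (j+1) (h+1) (by omega) (by omega) (by omega)
    have r1 : j + 1 - 1 = j := by ring
    have r2 : j - 1 + 1 = j := by ring
    have r3 : h + 1 + 1 = h + 2 := by ring
    rw [r1, r3] at e2
    rw [r2, r3]
    simp only [sub_mul]
    linarith

end

/-- Lemma 5: let `g s` be the normalized line family with spacing
parameter `s`, and `c > 0`. If `m* = min {m ≥ 1 : g (2m) (m,m) ≥ c}` exists, then
`{m ≥ 1 : g m (⌊m/2⌋,⌊m/2⌋) < c}` is nonempty with a maximum `m**`, and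
`m* = ⌊m**/2⌋ + 1`. -/
theorem line_network_spacing_bounds (p c : ℝ) (hp0 : 0 < p) (hp1 : p < 1) (hc : 0 < c)
    (g : ℤ → ℤ → ℤ → ℝ)
    (hg : ∀ s : ℤ, 1 ≤ s → IsLineAgeFamily p 1 0 s (g s))
    (mstar : ℤ)
    (hmem : 1 ≤ mstar ∧ c ≤ g (2 * mstar) mstar mstar)
    (hmin : ∀ m : ℤ, 1 ≤ m → c ≤ g (2 * m) m m → mstar ≤ m) :
    ∃ mss : ℤ, (1 ≤ mss ∧ g mss (mss / 2) (mss / 2) < c) ∧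
      (∀ m : ℤ, 1 ≤ m → g m (m / 2) (m / 2) < c → m ≤ mss) ∧
      mstar = mss / 2 + 1 := by
  obtain ⟨hm1, hgm⟩ := hmem
  -- the diagonal values are monotone in k
  have hchainN : ∀ n : ℕ, c ≤ g (2*(mstar+n)) (mstar+n) (mstar+n) := by
    intro n
    induction n with
    | zero => simpa using hgm
    | succ n ih =>
      have hs := g_shift p hp0 hp1 g hg (2*(mstar+n)) (by omega) (mstar+n) (mstar+n)
        (by omega) le_rfl (by omega)
      have h2 : 2*(mstar+(n+1:ℕ)) = 2*(mstar+n)+2 := by push_cast; ring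
      have h3 : mstar+(n+1:ℕ) = (mstar+n)+1 := by push_cast; ring
      rw [h2, h3]
      linarith
  have hchainA : ∀ k : ℤ, mstar ≤ k → c ≤ g (2*k) k k := by
    intro k hk
    have hk2 : k = mstar + ((k - mstar).toNat : ℤ) := by omega
    rw [hk2]
    exact hchainN (k - mstar).toNat
  have hodd : ∀ k : ℤ, mstar ≤ k → c ≤ g (2*k+1) k k := by
    intro k hk
    have := g_mono p hp0 hp1 g hg (2*k) (by omega) k k (by omega) le_rfl (by omega)
    have := hchainA k hk
    linarith
  have hbelow : ∀ k : ℤ, 1 ≤ k → k < mstar → g (2*k) k k < c := by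
    intro k h1 h2
    by_contra hcon
    push_neg at hcon
    have := hmin k h1 hcon
    omega
  by_cases hoddc : g (2*mstar - 1) (mstar-1) (mstar-1) < c
  · refine ⟨2*mstar - 1, ⟨by omega, ?_⟩, ?_, by omega⟩
    · have hd : (2*mstar - 1)/2 = mstar - 1 := by omega
      rw [hd]; exact hoddc
    · intro m h1m hlt
      by_contra hcon
      push_neg at hcon
      rcases Int.even_or_odd m with ⟨k, hk⟩ | ⟨k, hk⟩
      · have hk' : mstar ≤ k := by omega
        have hd : m / 2 = k := by omega
        have hm2 : m = 2*k := by omega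
        rw [hd, hm2] at hlt
        have := hchainA k hk'
        linarith
      · have hk' : mstar ≤ k := by omega
        have hd : m / 2 = k := by omega
        have hm2 : m = 2*k+1 := by omega
        rw [hd, hm2] at hlt
        have := hodd k hk'
        linarith
  · push_neg at hoddc
    have hm2 : 2 ≤ mstar := by
      by_contra hcon
      have hms : mstar = 1 := by omega
      have h0 : g 1 0 0 = 0 :=
        (hg 1 le_rfl).1 0 0 le_rfl le_rfl (by omega) (Or.inl rfl)
      rw [hms] at hoddc
      norm_num at hoddc
      rw [h0] at hoddc
      linarith
    refine ⟨2*mstar - 2, ⟨by omega, ?_⟩, ?_, by omega⟩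
    · have hd : (2*mstar - 2)/2 = mstar - 1 := by omega
      have he : 2*mstar - 2 = 2*(mstar - 1) := by ring
      rw [hd, he]
      exact hbelow (mstar - 1) (by omega) (by omega)
    · intro m h1m hlt
      by_contra hcon
      push_neg at hcon
      rcases Int.even_or_odd m with ⟨k, hk⟩ | ⟨k, hk⟩
      · have hk' : mstar ≤ k := by omega
        have hd : m / 2 = k := by omega
        have hm' : m = 2*k := by omega
        rw [hd, hm'] at hlt
        have := hchainA k hk'
        linarith
      · have hk' : mstar - 1 ≤ k := by omega
        have hd : m / 2 = k := by omega
        have hm' : m = 2*k+1 := by omega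
        rw [hd, hm'] at hlt
        rcases eq_or_lt_of_le hk' with heq | hlt'
        · have : 2*k+1 = 2*mstar - 1 := by omega
          rw [this] at hlt
          have hk2 : k = mstar - 1 := by omega
          rw [hk2] at hlt
          linarith
        · have := hodd k (by omega)
          linarith
end

section
/- (Lemma 6(a)) Let y be a fully-connected age family with parameters (n, m, p, p_e, x_S), p ∈ (0,1), and let g be a normalized fully-connected family with parameters (n, m, p). Then y(k) = x_S + p_e·g(k) for all 1 ≤ k ≤ n−m; in particular the expected age of every block of k non-subscribers has the form x_S + p_e·g(p,m,k) with g independent of x_S and p_e. -/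
/-- A fully-connected age family with parameters `n`, `m`, `p`, `pe`, `xS`:
`y k` is the long-term expected version age of a block of `k` non-subscribing
users in a fully-connected gossip network of `n` users with `m` subscribers. -/
def IsFCAgeFamily (n m : ℕ) (p pe xS : ℝ) (y : ℕ → ℝ) : Prop :=
  ∀ k : ℕ, 1 ≤ k → k ≤ n - m →
    y k * (1 - (1 - p) ^ (k * (n - k))) =
      pe + (∑ i ∈ Finset.Icc 1 (n - m - k),
        (Nat.choose (n - m - k) i : ℝ) * y (k + i) * (1 - (1 - p) ^ k) ^ i
          * (1 - p) ^ (k * (n - k - i)))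
      + (1 - (1 - p) ^ (k * m)) * xS

/-- Lemma 6(a): a fully-connected age family decomposes as
`y(k) = x_S + p_e · g(k)`, where `g` is the normalized fully-connected family
(parameters `pe = 1`, `xS = 0`). -/
theorem fcAgeFamily_eq_xS_add_pe_mul_normalized (n m : ℕ) (hn : 1 ≤ n)
    (hm1 : 1 ≤ m) (hmn : m ≤ n) (p pe xS : ℝ) (hp0 : 0 < p) (hp1 : p < 1)
    (y g : ℕ → ℝ)
    (hy : IsFCAgeFamily n m p pe xS y)
    (hg : IsFCAgeFamily n m p 1 0 g) :
    ∀ k : ℕ, 1 ≤ k → k ≤ n - m → y k = xS + pe * g k := by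
  suffices H : ∀ d k, 1 ≤ k → k ≤ n - m → n - m - k = d → y k = xS + pe * g k by
    intro k hk1 hk2; exact H (n - m - k) k hk1 hk2 rfl
  intro d
  induction d using Nat.strong_induction_on with
  | _ d ih =>
  intro k hk1 hk2 hd
  have hq0 : (0:ℝ) < 1 - p := by linarith
  have hq1 : (1:ℝ) - p < 1 := by linarith
  have hkn : k + m ≤ n := by omega
  set N := n - m - k with hNdef
  have hnk : n - k = m + N := by omega
  have hApow : (1 - p) ^ (k * (n - k)) < 1 := by
    apply pow_lt_one₀ (le_of_lt hq0) hq1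
    have : 1 ≤ n - k := by omega
    positivity
  have hAne : 1 - (1 - p) ^ (k * (n - k)) ≠ 0 := by linarith
  have e1 := hy k hk1 hk2
  have e2 := hg k hk1 hk2
  rw [← hNdef] at e1 e2
  -- induction hypothesis applied to each term of the sum
  have hih : ∀ i ∈ Finset.Icc 1 N, y (k + i) = xS + pe * g (k + i) := by
    intro i hi
    obtain ⟨hi1, hi2⟩ := Finset.mem_Icc.mp hi
    exact ih (n - m - (k + i)) (by omega) (k + i) (by omega) (by omega) rfl
  -- binomial identity
  have hbin : (∑ i ∈ Finset.Icc 1 N,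
      (Nat.choose N i : ℝ) * (1 - (1 - p) ^ k) ^ i * (1 - p) ^ (k * (n - k - i)))
      = (1 - p) ^ (k * m) - (1 - p) ^ (k * (n - k)) := by
    have h1 : ∀ i ∈ Finset.Icc 1 N,
        (Nat.choose N i : ℝ) * (1 - (1 - p) ^ k) ^ i * (1 - p) ^ (k * (n - k - i))
        = (1 - p) ^ (k * m) *
          ((1 - (1 - p) ^ k) ^ i * ((1 - p) ^ k) ^ (N - i) * (Nat.choose N i : ℝ)) := by
      intro i hi
      obtain ⟨hi1, hi2⟩ := Finset.mem_Icc.mp hi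
      have h2 : n - k - i = m + (N - i) := by omega
      rw [h2, Nat.mul_add, pow_add, ← pow_mul]
      ring
    rw [Finset.sum_congr rfl h1, ← Finset.mul_sum]
    have hrange : Finset.range (N + 1) = insert 0 (Finset.Icc 1 N) := by
      ext x; simp [Finset.mem_range, Finset.mem_Icc]; omega
    have hbig : (∑ i ∈ Finset.range (N + 1),
        (1 - (1 - p) ^ k) ^ i * ((1 - p) ^ k) ^ (N - i) * (Nat.choose N i : ℝ)) = 1 := by
      rw [← add_pow]
      norm_num
    rw [hrange, Finset.sum_insert (by simp)] at hbig
    simp only [pow_zero, Nat.sub_zero, Nat.choose_zero_right, Nat.cast_one, one_mul, mul_one] at hbig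
    have hsum1 : (∑ i ∈ Finset.Icc 1 N,
        (1 - (1 - p) ^ k) ^ i * ((1 - p) ^ k) ^ (N - i) * (Nat.choose N i : ℝ))
        = 1 - ((1 - p) ^ k) ^ N := by linarith
    rw [hsum1]
    rw [hnk, Nat.mul_add, pow_add, ← pow_mul]
    ring
  -- rewrite the y-sum using the induction hypothesis
  have hsum' : (∑ i ∈ Finset.Icc 1 N,
      (Nat.choose N i : ℝ) * y (k + i) * (1 - (1 - p) ^ k) ^ i * (1 - p) ^ (k * (n - k - i)))
      = pe * (∑ i ∈ Finset.Icc 1 N,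
          (Nat.choose N i : ℝ) * g (k + i) * (1 - (1 - p) ^ k) ^ i * (1 - p) ^ (k * (n - k - i)))
        + xS * ((1 - p) ^ (k * m) - (1 - p) ^ (k * (n - k))) := by
    rw [← hbin, Finset.mul_sum, Finset.mul_sum, ← Finset.sum_add_distrib]
    apply Finset.sum_congr rfl
    intro i hi
    rw [hih i hi]
    ring
  have key : y k * (1 - (1 - p) ^ (k * (n - k)))
      = (xS + pe * g k) * (1 - (1 - p) ^ (k * (n - k))) := by
    linear_combination e1 - pe * e2 + hsum'
  exact mul_right_cancel₀ hAne key
end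

section
/- Let y be a fully-connected age family with parameters (n, m, p, p_e, x_S), where p ∈ (0,1), p_e > 0 and 1 ≤ m ≤ n−1. Then y(k) > x_S for all 1 ≤ k ≤ n−m; i.e., every block of non-subscribing users has strictly larger expected age than a subscriber. -/
/-- for `pe > 0` and `1 ≤ m ≤ n − 1`, every block of non-subscribing
users has strictly larger expected age than a subscriber: `y(k) > x_S`. -/
theorem fcAgeFamily_gt_xS (n m : ℕ) (hn : 1 ≤ n) (hm1 : 1 ≤ m) (hmn : m ≤ n - 1)
    (p pe xS : ℝ) (hp0 : 0 < p) (hp1 : p < 1) (hpe : 0 < pe)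
    (y : ℕ → ℝ) (hy : IsFCAgeFamily n m p pe xS y) :
    ∀ k : ℕ, 1 ≤ k → k ≤ n - m → xS < y k := by
  have hq0 : (0:ℝ) < 1 - p := by linarith
  have hq1 : (1:ℝ) - p < 1 := by linarith
  -- key step lemma
  have step : ∀ k : ℕ, 1 ≤ k → k ≤ n - m →
      (∀ i : ℕ, 1 ≤ i → i ≤ n - m - k → xS < y (k + i)) → xS < y k := by
    intro k hk1 hk2 hIH
    set N := n - m - k with hN
    set q : ℝ := (1 - p) ^ k with hqdef
    have hqpos : 0 < q := pow_pos hq0 k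
    have hqlt : q < 1 := pow_lt_one₀ (le_of_lt hq0) hq1 (by omega)
    have hnk : n - k = N + m := by omega
    -- binomial identity
    have hbin : ∑ i ∈ Finset.range (N + 1), (1 - q) ^ i * q ^ (N - i) * (Nat.choose N i : ℝ) = 1 := by
      rw [← add_pow]; norm_num
    have hins : Finset.range (N + 1) = insert 0 (Finset.Icc 1 N) := by
      ext x; simp; omega
    have hsum1 : ∑ i ∈ Finset.Icc 1 N, (1 - q) ^ i * q ^ (N - i) * (Nat.choose N i : ℝ)
        = 1 - q ^ N := by
      have h0 : (0:ℕ) ∉ Finset.Icc 1 N := by simp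
      rw [hins, Finset.sum_insert h0] at hbin
      simp at hbin
      linarith [hbin]
    -- rewrite the coefficient sum with xS
    have hcoef : ∑ i ∈ Finset.Icc 1 N,
        (Nat.choose N i : ℝ) * xS * (1 - q) ^ i * (1 - p) ^ (k * (n - k - i))
        = ((1 - p) ^ (k * m) - (1 - p) ^ (k * (n - k))) * xS := by
      have hrw : ∀ i ∈ Finset.Icc 1 N,
          (Nat.choose N i : ℝ) * xS * (1 - q) ^ i * (1 - p) ^ (k * (n - k - i))
          = (xS * q ^ m) * ((1 - q) ^ i * q ^ (N - i) * (Nat.choose N i : ℝ)) := by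
        intro i hi
        simp only [Finset.mem_Icc] at hi
        have he : n - k - i = (N - i) + m := by omega
        rw [he, Nat.mul_add, pow_add, pow_mul, pow_mul, ← hqdef]
        ring
      rw [Finset.sum_congr rfl hrw, ← Finset.mul_sum, hsum1]
      have h1 : (1 - p) ^ (k * m) = q ^ m := by rw [hqdef, ← pow_mul, mul_comm]
      have h2 : (1 - p) ^ (k * (n - k)) = q ^ N * q ^ m := by
        rw [hnk, Nat.mul_add, pow_add, pow_mul, pow_mul, ← hqdef]
      rw [h1, h2]; ring
    -- lower-bound the y-sum
    have hge : ∑ i ∈ Finset.Icc 1 N,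
        (Nat.choose N i : ℝ) * xS * (1 - q) ^ i * (1 - p) ^ (k * (n - k - i))
        ≤ ∑ i ∈ Finset.Icc 1 N,
        (Nat.choose N i : ℝ) * y (k + i) * (1 - q) ^ i * (1 - p) ^ (k * (n - k - i)) := by
      apply Finset.sum_le_sum
      intro i hi
      simp only [Finset.mem_Icc] at hi
      have hy' : xS ≤ y (k + i) := le_of_lt (hIH i hi.1 hi.2)
      have hnn1 : (0:ℝ) ≤ (Nat.choose N i : ℝ) := Nat.cast_nonneg _
      have hnn2 : (0:ℝ) ≤ (1 - q) ^ i := pow_nonneg (by linarith) i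
      have hnn3 : (0:ℝ) ≤ (1 - p) ^ (k * (n - k - i)) := pow_nonneg (le_of_lt hq0) _
      have := mul_le_mul_of_nonneg_left hy' hnn1
      nlinarith [mul_le_mul_of_nonneg_right (mul_le_mul_of_nonneg_right this hnn2) hnn3]
    have heq := hy k hk1 hk2
    rw [← hN, ← hqdef] at heq
    have hApos : (0:ℝ) < 1 - (1 - p) ^ (k * (n - k)) := by
      have : (1 - p) ^ (k * (n - k)) < 1 :=
        pow_lt_one₀ (le_of_lt hq0) hq1 (Nat.mul_ne_zero (by omega) (by omega))
      linarith
    have hfin : xS * (1 - (1 - p) ^ (k * (n - k))) < y k * (1 - (1 - p) ^ (k * (n - k))) := by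
      rw [heq]
      have hc := hcoef
      nlinarith [hge, hc]
    exact lt_of_mul_lt_mul_right (by linarith [hfin]) (le_of_lt hApos)
  -- downward induction
  have main : ∀ d : ℕ, ∀ k : ℕ, 1 ≤ k → k ≤ n - m → n - m - k ≤ d → xS < y k := by
    intro d
    induction d with
    | zero =>
      intro k hk1 hk2 hd
      exact step k hk1 hk2 (fun i hi1 hi2 => by omega)
    | succ d ih =>
      intro k hk1 hk2 hd
      exact step k hk1 hk2 (fun i hi1 hi2 =>
        ih (k + i) (by omega) (by omega) (by omega))
  intro k hk1 hk2
  exact main (n - m - k) k hk1 hk2 le_rfl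
end

section
/- (Lemma 6(b)) Fix integers n ≥ 2 and 1 ≤ m ≤ n−1, and reals p ∈ (0,1), p_e ≥ 0, x_S ∈ ℝ. Let y be the fully-connected age family with parameters (n, m, p, p_e, x_S) and y' the one with parameters (n, m+1, p, p_e, x_S). Then y'(k) ≤ y(k) for all 1 ≤ k ≤ n−m−1; i.e., the expected age of a block of k non-subscribing users is nonincreasing in the number m of subscribers. -/
open Finset

theorem sum_Icc_one_choose_mul_pow_add_pow {R : Type*} [CommSemiring R] (a b : R) (N : ℕ) :
    ∑ i ∈ Icc 1 N, (N.choose i : R) * a ^ i * b ^ (N - i) + b ^ N = (a + b) ^ N := by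
  rw [add_pow, range_eq_Ico, sum_eq_sum_Ico_succ_bot N.succ_pos, zero_add, Nat.succ_eq_add_one,
    Ico_add_one_right_eq_Icc, add_comm]
  simp only [pow_zero, one_mul, Nat.sub_zero, Nat.choose_zero_right, Nat.cast_one, mul_one]
  congr 1
  exact sum_congr rfl fun i _ => by ring

def fcWeight (n : ℕ) (p : ℝ) (k i : ℕ) : ℝ :=
  (1 - (1 - p) ^ k) ^ i * (1 - p) ^ (k * (n - k - i))

theorem fcWeight_nonneg {p : ℝ} (hp0 : 0 ≤ p) (hp1 : p ≤ 1) (n k i : ℕ) :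
    0 ≤ fcWeight n p k i := by
  have : (1 - p) ^ k ≤ 1 := pow_le_one₀ (by linarith) (by linarith)
  unfold fcWeight
  exact mul_nonneg (pow_nonneg (by linarith) _) (pow_nonneg (by linarith) _)

theorem sum_choose_mul_fcWeight (p : ℝ) {n m k N : ℕ} (h : k + N + m = n) :
    ∑ i ∈ Icc 1 N, (N.choose i : ℝ) * fcWeight n p k i =
      (1 - p) ^ (k * m) - (1 - p) ^ (k * (n - k)) := by
  have hterm : ∀ i ∈ Icc 1 N, (N.choose i : ℝ) * fcWeight n p k i =
      (N.choose i : ℝ) * (1 - (1 - p) ^ k) ^ i * ((1 - p) ^ k) ^ (N - i) * (1 - p) ^ (k * m) := by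
    intro i hi
    rw [fcWeight, show n - k - i = N - i + m by grind, mul_add, pow_add, pow_mul]
    ring
  have hbin := sum_Icc_one_choose_mul_pow_add_pow (1 - (1 - p) ^ k) ((1 - p) ^ k) N
  rw [sub_add_cancel, one_pow] at hbin
  rw [sum_congr rfl hterm, ← sum_mul, show n - k = N + m by omega, mul_add, pow_add, pow_mul]
  linear_combination (1 - p) ^ (k * m) * hbin

theorem one_sub_one_sub_pow_pos {p : ℝ} (hp0 : 0 < p) (hp1 : p < 1) {n k : ℕ} (hk : 1 ≤ k)
    (hkn : k < n) : 0 < 1 - (1 - p) ^ (k * (n - k)) :=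
  sub_pos.2 (pow_lt_one₀ (by linarith) (by linarith) (Nat.mul_ne_zero (by omega) (by omega)))

theorem sum_choose_mul_le_sum_choose_mul {N N' : ℕ} (hN : N ≤ N') {f g w : ℕ → ℝ}
    (hf : ∀ i ∈ Icc 1 N, 0 ≤ f i) (hfg : ∀ i ∈ Icc 1 N, f i ≤ g i)
    (hg : ∀ i ∈ Icc 1 N', 0 ≤ g i) (hw : ∀ i, 0 ≤ w i) :
    ∑ i ∈ Icc 1 N, (N.choose i : ℝ) * f i * w i ≤
      ∑ i ∈ Icc 1 N', (N'.choose i : ℝ) * g i * w i :=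
  calc ∑ i ∈ Icc 1 N, (N.choose i : ℝ) * f i * w i
      ≤ ∑ i ∈ Icc 1 N, (N'.choose i : ℝ) * g i * w i := by
        refine sum_le_sum fun i hi => mul_le_mul_of_nonneg_right ?_ (hw i)
        exact mul_le_mul (by exact_mod_cast Nat.choose_le_choose i hN) (hfg i hi) (hf i hi)
          (Nat.cast_nonneg _)
    _ ≤ ∑ i ∈ Icc 1 N', (N'.choose i : ℝ) * g i * w i := by
        refine sum_le_sum_of_subset_of_nonneg (Icc_subset_Icc_right hN) fun i hi _ => ?_
        exact mul_nonneg (mul_nonneg (Nat.cast_nonneg _) (hg i hi)) (hw i)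

namespace IsFCAgeFamily

variable {n m : ℕ} {p pe xS : ℝ} {y : ℕ → ℝ}

/-- By `sum_choose_mul_fcWeight`, subtracting `xS` absorbs the subscriber term. -/
theorem sub_mul_eq (hy : IsFCAgeFamily n m p pe xS y) {k : ℕ} (hk : 1 ≤ k) (hkn : k ≤ n - m) :
    (y k - xS) * (1 - (1 - p) ^ (k * (n - k))) =
      pe + ∑ i ∈ Icc 1 (n - m - k),
        ((n - m - k).choose i : ℝ) * (y (k + i) - xS) * fcWeight n p k i := by
  have hsplit : ∑ i ∈ Icc 1 (n - m - k),
        ((n - m - k).choose i : ℝ) * (y (k + i) - xS) * fcWeight n p k i =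
      ∑ i ∈ Icc 1 (n - m - k), ((n - m - k).choose i : ℝ) * y (k + i) * (1 - (1 - p) ^ k) ^ i
          * (1 - p) ^ (k * (n - k - i)) -
        xS * ∑ i ∈ Icc 1 (n - m - k), ((n - m - k).choose i : ℝ) * fcWeight n p k i := by
    rw [mul_sum, ← sum_sub_distrib]
    exact sum_congr rfl fun i _ => by rw [fcWeight]; ring
  rw [hsplit, sum_choose_mul_fcWeight p (m := m) (by omega)]
  linear_combination hy k hk hkn

theorem le_apply (hp0 : 0 < p) (hp1 : p < 1) (hpe : 0 ≤ pe) (hm : 1 ≤ m)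
    (hy : IsFCAgeFamily n m p pe xS y) : ∀ k, 1 ≤ k → k ≤ n - m → xS ≤ y k := by
  refine Nat.strong_decreasing_induction ⟨n, fun j hj _ hjn => by omega⟩ fun k ih hk hkn => ?_
  have hsum : 0 ≤ ∑ i ∈ Icc 1 (n - m - k),
      ((n - m - k).choose i : ℝ) * (y (k + i) - xS) * fcWeight n p k i := by
    refine sum_nonneg fun i hi => ?_
    have hi := mem_Icc.1 hi
    have : xS ≤ y (k + i) := ih (k + i) (by omega) (by omega) (by omega)
    exact mul_nonneg (mul_nonneg (Nat.cast_nonneg _) (sub_nonneg.2 this))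
      (fcWeight_nonneg hp0.le hp1.le ..)
  have hD := one_sub_one_sub_pow_pos hp0 hp1 hk (show k < n by omega)
  have h := hy.sub_mul_eq hk hkn
  exact sub_nonneg.1 ((mul_nonneg_iff_of_pos_right hD).1 (h ▸ add_nonneg hpe hsum))

end IsFCAgeFamily

theorem fcAgeFamily_antitone_in_m_general (n m : ℕ) (hm1 : 1 ≤ m)
    (p pe xS : ℝ) (hp0 : 0 < p) (hp1 : p < 1) (hpe : 0 ≤ pe)
    (y y' : ℕ → ℝ)
    (hy : IsFCAgeFamily n m p pe xS y)
    (hy' : IsFCAgeFamily n (m + 1) p pe xS y') :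
    ∀ k : ℕ, 1 ≤ k → k ≤ n - m - 1 → y' k ≤ y k := by
  have hxS_le := hy.le_apply hp0 hp1 hpe hm1
  have hxS_le' := hy'.le_apply hp0 hp1 hpe m.succ_pos
  refine Nat.strong_decreasing_induction ⟨n, fun j hj _ hjn => by omega⟩ fun k ih hk hkn => ?_
  have hsum := sum_choose_mul_le_sum_choose_mul (N := n - (m + 1) - k) (N' := n - m - k)
    (f := fun i => y' (k + i) - xS) (g := fun i => y (k + i) - xS) (w := fcWeight n p k)
    (by omega)
    (fun i hi => sub_nonneg.2 (hxS_le' _ (by omega) (by grind)))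
    (fun i hi => sub_le_sub_right (ih _ (by grind) (by omega) (by grind)) _)
    (fun i hi => sub_nonneg.2 (hxS_le _ (by omega) (by grind)))
    (fcWeight_nonneg hp0.le hp1.le n k)
  have hD := one_sub_one_sub_pow_pos hp0 hp1 hk (show k < n by omega)
  have hle : (y' k - xS) * (1 - (1 - p) ^ (k * (n - k))) ≤
      (y k - xS) * (1 - (1 - p) ^ (k * (n - k))) := by
    rw [hy.sub_mul_eq hk (by omega), hy'.sub_mul_eq hk (by omega)]
    linarith
  linarith [le_of_mul_le_mul_right hle hD]

/-- Lemma 6(b): the expected age of a block of `k` non-subscribing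
users is nonincreasing in the number of subscribers: `y'(k) ≤ y(k)` where `y` has
`m` subscribers and `y'` has `m + 1` subscribers. -/
theorem fcAgeFamily_antitone_in_m (n m : ℕ) (hn : 2 ≤ n) (hm1 : 1 ≤ m)
    (hmn : m ≤ n - 1) (p pe xS : ℝ) (hp0 : 0 < p) (hp1 : p < 1) (hpe : 0 ≤ pe)
    (y y' : ℕ → ℝ)
    (hy : IsFCAgeFamily n m p pe xS y)
    (hy' : IsFCAgeFamily n (m + 1) p pe xS y') :
    ∀ k : ℕ, 1 ≤ k → k ≤ n - m - 1 → y' k ≤ y k :=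
  fcAgeFamily_antitone_in_m_general n m hm1 p pe xS hp0 hp1 hpe y y' hy hy'
end
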